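/- arXiv:2103.10871 — 2 statements merged into one kernel-verified Lean document; each statement's English description precedes it below -/
import Mathlib

section
/- The graph H_9 is 4-χρ-vertex-critical; that is, χρ(H_9) = 4 and χρ(H_9 − v) < 4 for every vertex v of H_9. -/
open SimpleGraph

/-- A `k`-packing coloring of `G`: colors in `{1,…,k}` and distinct vertices of equal color `i`
are at (extended, shortest-path) distance greater than `i`. -/
def IsPackingColoring {V : Type*} (G : SimpleGraph V) (k : ℕ) (c : V → ℕ) : Prop :=
  (∀ v, 1 ≤ c v ∧ c v ≤ k) ∧
    ∀ u v : V, u ≠ v → c u = c v → (c u : ℕ∞) < G.edist u v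

/-- The packing chromatic number of `G`: the least `k` admitting a `k`-packing coloring. -/
noncomputable def packingChromaticNumber {V : Type*} (G : SimpleGraph V) : ℕ :=
  sInf {k | ∃ c : V → ℕ, IsPackingColoring G k c}

/-- `G` is `4`-`χρ`-vertex-critical: `χρ(G) = 4` and deleting any vertex drops `χρ` below `4`. -/
def FourVertexCritical {V : Type*} (G : SimpleGraph V) : Prop :=
  packingChromaticNumber G = 4 ∧
    ∀ v : V, packingChromaticNumber (G.induce ({v}ᶜ : Set V)) < 4

/-- `G` contains a (not necessarily induced) subgraph isomorphic to `H`. -/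
def HasCopy {W V : Type*} (H : SimpleGraph W) (G : SimpleGraph V) : Prop :=
  ∃ f : H →g G, Function.Injective f

/-- The cycle on `n` vertices (for `n ≥ 3`). -/
def CycGraph (n : ℕ) : SimpleGraph (Fin n) :=
  SimpleGraph.fromRel (fun i j => (i.val + 1) % n = j.val)

/-- `H₉`: path `a(0)-b(1)-c(2)-d(3)-e(4)` with pendant leaves `f(5), g(6), h(7)` attached to
`b=1, c=2, d=3` respectively. -/
def H9graph : SimpleGraph (Fin 8) :=
  SimpleGraph.fromRel (fun i j =>
    (j.val = i.val + 1 ∧ i.val ≤ 3) ∨ (i.val = 1 ∧ j.val = 5) ∨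
      (i.val = 2 ∧ j.val = 6) ∨ (i.val = 3 ∧ j.val = 7))


lemma H9_adj_iff (a b : Fin 8) : H9graph.Adj a b ↔ a ≠ b ∧
    (((b.val = a.val + 1 ∧ a.val ≤ 3) ∨ (a.val = 1 ∧ b.val = 5) ∨
      (a.val = 2 ∧ b.val = 6) ∨ (a.val = 3 ∧ b.val = 7)) ∨
     ((a.val = b.val + 1 ∧ b.val ≤ 3) ∨ (b.val = 1 ∧ a.val = 5) ∨
      (b.val = 2 ∧ a.val = 6) ∨ (b.val = 3 ∧ a.val = 7))) := Iff.rfl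

instance : DecidableRel H9graph.Adj := fun a b =>
  decidable_of_iff _ (H9_adj_iff a b).symm

/-- The distance matrix of `H9graph`. -/
def Mdist : Fin 8 → Fin 8 → ℕ :=
  ![![0,1,2,3,4,2,3,4], ![1,0,1,2,3,1,2,3], ![2,1,0,1,2,2,1,2], ![3,2,1,0,1,3,2,1],
    ![4,3,2,1,0,4,3,2], ![2,1,2,3,4,0,3,4], ![3,2,1,2,3,3,0,3], ![4,3,2,1,2,4,3,0]]

theorem edist_le_of_cert {V : Type*} (G : SimpleGraph V) (M : V → V → ℕ)
    (h : ∀ u v, u = v ∨ ∃ w, G.Adj u w ∧ M w v + 1 ≤ M u v) :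
    ∀ n u v, M u v ≤ n → G.edist u v ≤ M u v := by
  intro n
  induction n with
  | zero =>
    intro u v hn
    rcases h u v with rfl | ⟨w, _, hw⟩
    · simp
    · omega
  | succ n ih =>
    intro u v hn
    rcases h u v with rfl | ⟨w, hadj, hw⟩
    · simp
    · calc G.edist u v ≤ G.edist u w + G.edist w v := SimpleGraph.edist_triangle
        _ ≤ 1 + (M w v : ℕ∞) := by
            gcongr
            · exact (SimpleGraph.edist_eq_one_iff_adj.mpr hadj).le
            · exact ih w v (by omega)
        _ ≤ (M u v : ℕ∞) := by
            rw [show ((1 : ℕ∞) + (M w v : ℕ)) = ((M w v + 1 : ℕ) : ℕ∞) by push_cast; ring]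
            exact Nat.cast_le.mpr hw

theorem le_edist_of_cert {V : Type*} (G : SimpleGraph V) (N : V → V → ℕ)
    (h0 : ∀ v, N v v = 0)
    (h1 : ∀ u x v, G.Adj u x → N u v ≤ N x v + 1) (u v : V) :
    (N u v : ℕ∞) ≤ G.edist u v := by
  have key : ∀ {a b : V} (p : G.Walk a b), N a b ≤ p.length := by
    intro a b p
    induction p with
    | nil => simp [h0]
    | cons hadj q ih =>
      rw [SimpleGraph.Walk.length_cons]
      exact (h1 _ _ _ hadj).trans (Nat.add_le_add_right ih 1)
  rw [SimpleGraph.edist_eq_sInf]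
  refine le_sInf ?_
  rintro x ⟨p, rfl⟩
  exact Nat.cast_le.mpr (key p)

lemma certUB : ∀ u v : Fin 8, u = v ∨ ∃ w, H9graph.Adj u w ∧ Mdist w v + 1 ≤ Mdist u v := by
  decide

lemma certLB0 : ∀ v : Fin 8, Mdist v v = 0 := by decide

lemma certLB1 : ∀ u x v : Fin 8, H9graph.Adj u x → Mdist u v ≤ Mdist x v + 1 := by decide

set_option maxRecDepth 4000 in
set_option synthInstance.maxHeartbeats 1000000 in
set_option synthInstance.maxSize 2000 in
lemma no3col : ∀ x0 x1 x2 x3 x4 x5 x6 x7 : Fin 3,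
    ¬(x0 ≠ x1 ∧ (x0 ≠ x2 ∨ x0.val + 1 < 2) ∧ (x0 ≠ x3 ∨ x0.val + 1 < 3) ∧ (x0 ≠ x5 ∨ x0.val + 1 < 2) ∧ (x0 ≠ x6 ∨ x0.val + 1 < 3) ∧ x1 ≠ x2 ∧ (x1 ≠ x3 ∨ x1.val + 1 < 2) ∧ (x1 ≠ x4 ∨ x1.val + 1 < 3) ∧ x1 ≠ x5 ∧ (x1 ≠ x6 ∨ x1.val + 1 < 2) ∧ (x1 ≠ x7 ∨ x1.val + 1 < 3) ∧ x2 ≠ x3 ∧ (x2 ≠ x4 ∨ x2.val + 1 < 2) ∧ (x2 ≠ x5 ∨ x2.val + 1 < 2) ∧ x2 ≠ x6 ∧ (x2 ≠ x7 ∨ x2.val + 1 < 2) ∧ x3 ≠ x4 ∧ (x3 ≠ x5 ∨ x3.val + 1 < 3) ∧ (x3 ≠ x6 ∨ x3.val + 1 < 2) ∧ x3 ≠ x7 ∧ (x4 ≠ x6 ∨ x4.val + 1 < 3) ∧ (x4 ≠ x7 ∨ x4.val + 1 < 2) ∧ (x5 ≠ x6 ∨ x5.val + 1 < 3) ∧ (x6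 ≠ x7 ∨ x6.val + 1 < 3)) := by decide

/-- The coloring used for `H9graph` itself. -/
def c0 : Fin 8 → ℕ := ![1,2,1,3,1,1,4,1]

/-- Row `v` is the coloring used for `H9graph` minus vertex `v`. -/
def CT : Fin 8 → Fin 8 → ℕ :=
  ![![1,1,3,2,1,2,1,1], ![1,1,1,2,1,1,3,1], ![1,2,1,1,2,1,1,3], ![1,2,1,1,1,1,3,1],
    ![1,2,3,1,1,1,1,2], ![2,1,3,2,1,1,1,1], ![1,2,1,3,1,1,1,1], ![1,2,3,1,2,1,1,1]]

lemma hub : ∀ u v : Fin 8, H9graph.edist u v ≤ Mdist u v :=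
  fun u v => edist_le_of_cert H9graph Mdist certUB (Mdist u v) u v le_rfl

lemma hlbGen {s : Set (Fin 8)} (u v : s) :
    (Mdist u.val v.val : ℕ∞) ≤ (H9graph.induce s).edist u v :=
  le_edist_of_cert (H9graph.induce s) (fun a b => Mdist a.val b.val)
    (fun a => certLB0 a.val) (fun a x b hadj => certLB1 a.val x.val b.val hadj) u v

lemma hlb (u v : Fin 8) : (Mdist u v : ℕ∞) ≤ H9graph.edist u v :=
  le_edist_of_cert H9graph Mdist certLB0 certLB1 u v

lemma c0_bounds : ∀ v : Fin 8, 1 ≤ c0 v ∧ c0 v ≤ 4 := by decide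

lemma c0_pairs : ∀ u v : Fin 8, u ≠ v → c0 u = c0 v → c0 u < Mdist u v := by decide

lemma CT_bounds : ∀ v u : Fin 8, 1 ≤ CT v u ∧ CT v u ≤ 3 := by decide

lemma CT_pairs : ∀ v u w : Fin 8, u ≠ v → w ≠ v → u ≠ w → CT v u = CT v w → CT v u < Mdist u w := by decide

lemma exists_no3 (c : Fin 8 → ℕ) (hb : ∀ v, 1 ≤ c v ∧ c v ≤ 3)
    (hnat : ∀ u v : Fin 8, u ≠ v → c u = c v → c u < Mdist u v) : False := by
  have hx : ∀ i : Fin 8, c i - 1 < 3 := fun i => by have := hb i; omega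
  set x : Fin 8 → Fin 3 := fun i => ⟨c i - 1, hx i⟩ with hxdef
  have hC : ∀ (u v : Fin 8) (m : ℕ), u ≠ v → Mdist u v = m →
      (x u ≠ x v ∨ (x u).val + 1 < m) := by
    intro u v m hne hm
    rcases eq_or_ne (c u) (c v) with he | he
    · right
      have h1 := hnat u v hne he
      have h2 := hb u
      simp only [hxdef]
      omega
    · left
      intro h
      have h2 := hb u
      have h3 := hb v
      have := congrArg Fin.val h
      simp only [hxdef] at this
      exact he (by omega)
  exact no3col (x 0) (x 1) (x 2) (x 3) (x 4) (x 5) (x 6) (x 7) ⟨(hC 0 1 1 (by decide) (by decide)).resolve_right (by omega), hC 0 2 2 (by decide) (by decide), hC 0 3 3 (by decide) (by decide), hC 0 5 2 (by decide) (by decide), hC 0 6 3 (by decide) (by decide), (hC 1 2 1 (by decide) (by decide)).resolve_right (by omega), hC 1 3 2 (by decide) (by decide), hC 1 4 3 (by decide) (by decide), (hC 1 5 1 (by decide) (by decide)).resolve_right (by omega), hC 1 6 2 (by decide) (by decide), hC 1 7 3 (by decide) (by decide), (hC 2 3 1 (by decide) (by decide)).resolve_right (by omega), hC 2 4 2 (by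 decide) (by decide), hC 2 5 2 (by decide) (by decide), (hC 2 6 1 (by decide) (by decide)).resolve_right (by omega), hC 2 7 2 (by decide) (by decide), (hC 3 4 1 (by decide) (by decide)).resolve_right (by omega), hC 3 5 3 (by decide) (by decide), hC 3 6 2 (by decide) (by decide), (hC 3 7 1 (by decide) (by decide)).resolve_right (by omega), hC 4 6 3 (by decide) (by decide), hC 4 7 2 (by decide) (by decide), hC 5 6 3 (by decide) (by decide), hC 6 7 3 (by decide) (by decide)⟩

theorem H9_fourVertexCritical : FourVertexCritical H9graph := by
  constructor
  · -- χρ(H9) = 4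
    have h4mem : (4 : ℕ) ∈ {k | ∃ c : Fin 8 → ℕ, IsPackingColoring H9graph k c} := by
      refine ⟨c0, c0_bounds, fun u v hne hcc => ?_⟩
      exact lt_of_lt_of_le (Nat.cast_lt.mpr (c0_pairs u v hne hcc)) (hlb u v)
    refine le_antisymm (Nat.sInf_le h4mem) (le_csInf ⟨4, h4mem⟩ ?_)
    rintro k ⟨c, hb, hp⟩
    by_contra hlt
    push_neg at hlt
    refine exists_no3 c (fun v => ⟨(hb v).1, (hb v).2.trans (by omega)⟩) ?_
    intro u v hne hcc
    have h1 : (c u : ℕ∞) < (Mdist u v : ℕ∞) := lt_of_lt_of_le (hp u v hne hcc) (hub u v)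
    exact_mod_cast h1
  · -- deleting any vertex
    intro v
    have hmem : (3 : ℕ) ∈ {k | ∃ c : ({v}ᶜ : Set (Fin 8)) → ℕ,
        IsPackingColoring (H9graph.induce ({v}ᶜ : Set (Fin 8))) k c} := by
      refine ⟨fun u => CT v u.val, fun u => CT_bounds v u.val, fun u w hne hcc => ?_⟩
      have hne' : u.val ≠ w.val := fun h => hne (Subtype.ext h)
      have hu : u.val ≠ v := u.2
      have hw : w.val ≠ v := w.2
      exact lt_of_lt_of_le (Nat.cast_lt.mpr (CT_pairs v u.val w.val hu hw hne' hcc)) (hlbGen u w)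
    calc packingChromaticNumber (H9graph.induce ({v}ᶜ : Set (Fin 8))) ≤ 3 :=
          Nat.sInf_le hmem
      _ < 4 := by omega
end

section
/- Every graph in the family F_2 is 4-χρ-vertex-critical; that is, for every l with l = 0 or l ≡ 2 (mod 4), the graph G obtained from a disjoint triangle and a path on three vertices by joining a vertex of the triangle to the middle vertex of the path by a path with exactly l internal vertices satisfies χρ(G) = 4 and χρ(G − v) < 4 for every vertex v. -/
open SimpleGraph

/-- A member of the family `𝓕₁`: two triangles `{0,1,2}` and `{l+3,l+4,l+5}` joined by a
path from `u = 2` to `v = l+3` with `l` internal vertices `3,…,l+2`. -/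
def F1Graph (l : ℕ) : SimpleGraph (Fin (l + 6)) :=
  SimpleGraph.fromRel (fun i j =>
    j.val = i.val + 1 ∨ (i.val = 0 ∧ j.val = 2) ∨ (i.val = l + 3 ∧ j.val = l + 5))

/-- A member of the family `𝓕₂`: a triangle `{0,1,2}` joined by a path from `u = 2` to
`v = l+3` with `l` internal vertices `3,…,l+2`, where `v` is the middle vertex of the path
`(l+4)-(l+3)-(l+5)`. -/
def F2Graph (l : ℕ) : SimpleGraph (Fin (l + 6)) :=
  SimpleGraph.fromRel (fun i j =>
    (j.val = i.val + 1 ∧ j.val ≤ l + 4) ∨ (i.val = 0 ∧ j.val = 2) ∨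
      (i.val = l + 3 ∧ j.val = l + 5))

/-- A member of the family `𝓕₃`: `A` is the path `0-1-2-3` (plus the edge `0-3` if
`c4 = true`, making it a 4-cycle) with non-pendant vertex `u = 2`, joined by a path with `l`
internal vertices `4,…,l+3` to the vertex `v = l+4` of the triangle `{l+4,l+5,l+6}`. -/
def F3Graph (c4 : Bool) (l : ℕ) : SimpleGraph (Fin (l + 7)) :=
  SimpleGraph.fromRel (fun i j =>
    (j.val = i.val + 1 ∧ i.val ≠ 3) ∨ (i.val = 2 ∧ j.val = 4) ∨
      (c4 = true ∧ i.val = 0 ∧ j.val = 3) ∨ (i.val = l + 4 ∧ j.val = l + 6))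

/-- A member of the family `𝓕₄`: paths `u₁(0)-u(1)-u₂(l+5+l')` and
`z₁(l+4+l')-z(l+3+l')-z₂(l+7+l')`, an edge `v(l+2)-v₁(l+6+l')`, with `u` joined to `v` by a
path through internal vertices `y₁(2),…,y_l(l+1)` and `v` joined to `z` by a path through
internal vertices `w₁(l+3),…,w_{l'}(l+2+l')`; if `e = 1` the extra edge `v₁ y_{l-1}` is
present, and if `e = 2` the extra edge `v₁ w₂` is present. -/
def F4Graph (l l' : ℕ) (e : Fin 3) : SimpleGraph (Fin (l + l' + 8)) :=
  SimpleGraph.fromRel (fun i j =>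
    (j.val = i.val + 1 ∧ j.val ≤ l + 4 + l') ∨ (i.val = 1 ∧ j.val = l + 5 + l') ∨
      (i.val = l + 2 ∧ j.val = l + 6 + l') ∨ (i.val = l + 3 + l' ∧ j.val = l + 7 + l') ∨
      (e = 1 ∧ i.val = l ∧ j.val = l + 6 + l') ∨
      (e = 2 ∧ i.val = l + 4 ∧ j.val = l + 6 + l'))

/-- A member of the family `𝓕₅`: `A` is the path `0-1-2-3` (plus edge `0-3` if `ac4 = true`)
with non-pendant vertex `u = 2`, `B` is the path `(l+5)-(l+4)-(l+6)-(l+7)` (plus edge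
`(l+5)-(l+7)` if `bc4 = true`) with non-pendant vertex `v = l+4`, and `u` is joined to `v`
by a path with `l` internal vertices `4,…,l+3`. -/
def F5Graph (ac4 bc4 : Bool) (l : ℕ) : SimpleGraph (Fin (l + 8)) :=
  SimpleGraph.fromRel (fun i j =>
    (j.val = i.val + 1 ∧ i.val ≠ 3 ∧ i.val ≠ l + 5) ∨ (i.val = 2 ∧ j.val = 4) ∨
      (i.val = l + 4 ∧ j.val = l + 6) ∨ (ac4 = true ∧ i.val = 0 ∧ j.val = 3) ∨
      (bc4 = true ∧ i.val = l + 5 ∧ j.val = l + 7))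

/-!
In `F2Graph l` the triangle is `{0, 1, 2}`, the spine is `2, …, l + 3` and `l + 4`, `l + 5` are the
pendants at `l + 3`. Distances are explicit: clamping every vertex to a position in `[1, l + 4]`,
they are differences of positions, except inside the pairs `{0, 1}` and `{l + 4, l + 5}`.

The triangle uses all three colours of a 3-packing colouring, which forces colours `3, 1` on the
vertices `2, 3`; from there the spine is forced, step by step, to follow the period-4 pattern
`3, 1, 2, 1`. As `l = 0` or `l ≡ 2 (mod 4)`, the vertex `l + 3` gets colour `1`, and both pendants
must avoid `1` and the colour of `l + 2`: they share a colour `≥ 2` at distance `2`.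

Conversely, the same pattern, shifted by 3 after the deleted vertex, 3-packing colours every
vertex-deleted subgraph even with distances measured in the whole graph; giving the deleted vertex
`1` a fourth colour then 4-packing colours `F2Graph l`.
-/

namespace SimpleGraph

variable {V W : Type*} {G : SimpleGraph V}

lemma Hom.edist_le {G' : SimpleGraph W} (f : G →g G') (u v : V) :
    G'.edist (f u) (f v) ≤ G.edist u v :=
  le_iInf fun p => (SimpleGraph.edist_le (p.map f)).trans_eq (by rw [Walk.length_map])

lemma edist_le_add_of_edist_le {u v w : V} {m n : ℕ} (huv : G.edist u v ≤ m)
    (hvw : G.edist v w ≤ n) : G.edist u w ≤ (m + n : ℕ) :=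
  G.edist_triangle.trans (by push_cast; exact add_le_add huv hvw)

lemma edist_le_sub_of_adj_succ (f : ℕ → V) {m n : ℕ}
    (hf : ∀ i, m ≤ i → i < n → G.Adj (f i) (f (i + 1))) (hmn : m ≤ n) :
    G.edist (f m) (f n) ≤ (n - m : ℕ) := by
  induction n, hmn using Nat.le_induction with
  | base => simp
  | succ n hmn ih =>
    refine (edist_le_add_of_edist_le (ih fun i hi hin => hf i hi (by omega))
      (edist_eq_one_iff_adj.mpr (hf n hmn (by omega))).le).trans ?_
    exact_mod_cast (by omega : n - m + 1 ≤ n + 1 - m)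

lemma two_le_edist {u v : V} (hne : u ≠ v) (hnadj : ¬ G.Adj u v) : 2 ≤ G.edist u v := by
  by_contra! h
  have : G.edist u v ≤ 1 := Order.le_of_lt_add_one (by simpa [one_add_one_eq_two] using h)
  exact (edist_le_one_iff_adj_or_eq.mp this).elim hnadj hne

lemma Walk.le_add_length {φ : V → ℕ} (hφ : ∀ ⦃a b⦄, G.Adj a b → φ a ≤ φ b + 1) {u v : V}
    (p : G.Walk u v) : φ u ≤ φ v + p.length := by
  induction p with
  | nil => simp
  | cons h _ ih => have := hφ h; rw [Walk.length_cons]; omega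

lemma dist_le_edist_of_adj_le {φ : V → ℕ} (hφ : ∀ ⦃a b⦄, G.Adj a b → φ a ≤ φ b + 1)
    (u v : V) : ((φ u).dist (φ v) : ℕ∞) ≤ G.edist u v := by
  wlog h : φ v ≤ φ u generalizing u v
  · rw [Nat.dist_comm, edist_comm]; exact this v u (by omega)
  refine le_iInf fun p => ?_
  have := p.le_add_length hφ
  rw [Nat.dist_comm, Nat.dist_eq_sub_of_le h]
  exact_mod_cast (by omega : φ u - φ v ≤ p.length)

end SimpleGraph

section PackingColoring

variable {V : Type*} {G : SimpleGraph V}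

def IsPackingColoringOn (G : SimpleGraph V) (s : Set V) (k : ℕ) (c : V → ℕ) : Prop :=
  (∀ v ∈ s, 1 ≤ c v ∧ c v ≤ k) ∧
    ∀ u ∈ s, ∀ v ∈ s, u ≠ v → c u = c v → (c u : ℕ∞) < G.edist u v

lemma IsPackingColoringOn.induce {s : Set V} {k : ℕ} {c : V → ℕ}
    (hc : IsPackingColoringOn G s k c) : IsPackingColoring (G.induce s) k (fun v => c v) :=
  ⟨fun v => hc.1 v v.2, fun u v huv h =>
    (hc.2 u u.2 v v.2 (Subtype.coe_ne_coe.mpr huv) h).trans_le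
      ((Embedding.induce s).toHom.edist_le u v)⟩

lemma IsPackingColoringOn.update [DecidableEq V] {v : V} {k : ℕ} {c : V → ℕ}
    (hc : IsPackingColoringOn G {v}ᶜ k c) :
    IsPackingColoring G (k + 1) (Function.update c v (k + 1)) := by
  refine ⟨fun u => ?_, fun u w huw h => ?_⟩
  · rcases eq_or_ne u v with rfl | hu
    · simp
    · simpa [hu] using (hc.1 u hu).imp id (·.trans k.le_succ)
  · by_cases hu : u = v
    · subst hu
      have := (hc.1 w huw.symm).2
      simp [huw.symm] at h
      omega
    · by_cases hw : w = v
      · subst hw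
        have := (hc.1 u hu).2
        simp [hu] at h
        omega
      · simp only [Function.update_of_ne hu, Function.update_of_ne hw] at h ⊢
        exact hc.2 u hu w hw huw h

lemma IsPackingColoring.mono {k m : ℕ} {c : V → ℕ} (hc : IsPackingColoring G k c) (hkm : k ≤ m) :
    IsPackingColoring G m c :=
  ⟨fun v => (hc.1 v).imp id (·.trans hkm), hc.2⟩

lemma packingChromaticNumber_le {k : ℕ} {c : V → ℕ} (hc : IsPackingColoring G k c) :
    packingChromaticNumber G ≤ k :=
  Nat.sInf_le ⟨c, hc⟩

lemma packingChromaticNumber_eq_succ {k : ℕ} {c : V → ℕ} (hc : IsPackingColoring G (k + 1) c)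
    (hk : ∀ c, ¬ IsPackingColoring G k c) : packingChromaticNumber G = k + 1 := by
  refine (packingChromaticNumber_le hc).antisymm (le_csInf ⟨_, c, hc⟩ ?_)
  rintro m ⟨c', hc'⟩
  by_contra! hm
  exact hk c' (hc'.mono (by omega))

end PackingColoring

namespace F2Graph

open Fin.NatCast

variable {l a b : ℕ}

def pos (l p : ℕ) : ℕ := max 1 (min p (l + 4))

def distance (l a b : ℕ) : ℕ :=
  if a = b then 0
  else if a ≤ 1 ∧ b ≤ 1 then 1
  else if l + 4 ≤ a ∧ l + 4 ≤ b then 2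
  else (pos l a).dist (pos l b)

lemma distance_comm : distance l a b = distance l b a := by
  unfold distance pos Nat.dist; split_ifs <;> omega

lemma distance_of_spine (ha : 1 ≤ a) (hab : a ≤ b) (hb : b ≤ l + 4) : distance l a b = b - a := by
  unfold distance pos Nat.dist; split_ifs <;> omega

lemma distance_zero_left (hb₂ : 2 ≤ b) (hb : b ≤ l + 4) : distance l 0 b = b - 1 := by
  unfold distance pos Nat.dist; split_ifs <;> omega

lemma distance_pendant (ha : 1 ≤ a) (ha₃ : a ≤ l + 3) : distance l a (l + 5) = l + 4 - a := by
  unfold distance pos Nat.dist; split_ifs <;> omega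

lemma distance_zero_pendant : distance l 0 (l + 5) = l + 3 := by
  unfold distance pos Nat.dist; split_ifs <;> omega

lemma distance_zero_one : distance l 0 1 = 1 := by
  unfold distance; split_ifs <;> omega

lemma distance_pendants : distance l (l + 4) (l + 5) = 2 := by
  unfold distance; split_ifs <;> omega

lemma adj_iff {a b : Fin (l + 6)} : (F2Graph l).Adj a b ↔ (a : ℕ) ≠ b ∧
    (((b : ℕ) = a + 1 ∧ (b : ℕ) ≤ l + 4) ∨ ((a : ℕ) = 0 ∧ (b : ℕ) = 2) ∨
        ((a : ℕ) = l + 3 ∧ (b : ℕ) = l + 5) ∨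
      ((a : ℕ) = b + 1 ∧ (a : ℕ) ≤ l + 4) ∨ ((b : ℕ) = 0 ∧ (a : ℕ) = 2) ∨
        ((b : ℕ) = l + 3 ∧ (a : ℕ) = l + 5)) := by
  simp only [F2Graph, fromRel_adj, ne_eq, Fin.ext_iff, or_assoc]

lemma adj_natCast {i j : ℕ} (hi : i < l + 6) (hj : j < l + 6) :
    (F2Graph l).Adj (i : Fin (l + 6)) (j : Fin (l + 6)) ↔ i ≠ j ∧
    ((j = i + 1 ∧ j ≤ l + 4) ∨ (i = 0 ∧ j = 2) ∨ (i = l + 3 ∧ j = l + 5) ∨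
      (i = j + 1 ∧ i ≤ l + 4) ∨ (j = 0 ∧ i = 2) ∨ (j = l + 3 ∧ i = l + 5)) := by
  rw [adj_iff, Fin.val_cast_of_lt hi, Fin.val_cast_of_lt hj]

lemma pos_le_pos_add_one {a b : Fin (l + 6)} (h : (F2Graph l).Adj a b) :
    pos l a ≤ pos l b + 1 := by
  rw [adj_iff] at h
  unfold pos
  omega

lemma distance_le_edist (a b : Fin (l + 6)) :
    (distance l a b : ℕ∞) ≤ (F2Graph l).edist a b := by
  unfold distance
  split_ifs with h₀ h₁ h₂
  · simp
  · exact Order.one_le_iff_pos.mpr (edist_pos_of_ne (Fin.ne_of_val_ne h₀))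
  · exact two_le_edist (Fin.ne_of_val_ne h₀) (by rw [adj_iff]; omega)
  · exact dist_le_edist_of_adj_le (fun _ _ => pos_le_pos_add_one) a b

lemma edist_natCast_le_distance (ha : a < l + 6) (hb : b < l + 6) (hab : a ≤ b) :
    (F2Graph l).edist (a : Fin (l + 6)) b ≤ distance l a b := by
  have spine : ∀ m n, m ≤ n → n ≤ l + 4 →
      (F2Graph l).edist (m : Fin (l + 6)) n ≤ (n - m : ℕ) := fun m n hmn hn =>
    edist_le_sub_of_adj_succ (fun i : ℕ => (i : Fin (l + 6)))
      (fun i _ hi => (adj_natCast (by omega) (by omega)).mpr (by omega)) hmn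
  have edge : ∀ i j, i < l + 6 → j < l + 6 → (F2Graph l).Adj (i : Fin (l + 6)) j →
      (F2Graph l).edist (i : Fin (l + 6)) j ≤ (1 : ℕ) := fun i j _ _ h =>
    (edist_eq_one_iff_adj.mpr h).le
  have e02 := edge 0 2 (by omega) (by omega) ((adj_natCast (by omega) (by omega)).mpr (by omega))
  have e35 := edge (l + 3) (l + 5) (by omega) (by omega)
    ((adj_natCast (by omega) (by omega)).mpr (by omega))
  have e34 := edge (l + 4) (l + 3) (by omega) (by omega)
    ((adj_natCast (by omega) (by omega)).mpr (by omega))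
  rcases (by omega : a = b ∨ (a = 0 ∧ b = 1) ∨ (a = l + 4 ∧ b = l + 5) ∨
      (1 ≤ a ∧ b ≤ l + 4) ∨ (a = 0 ∧ 2 ≤ b ∧ b ≤ l + 4) ∨
      (1 ≤ a ∧ a ≤ l + 3 ∧ b = l + 5) ∨ (a = 0 ∧ b = l + 5))
    with rfl | ⟨rfl, rfl⟩ | ⟨rfl, rfl⟩ | ⟨h₁, h⟩ | ⟨rfl, h₂, h⟩ | ⟨h₁, h, rfl⟩ | ⟨rfl, rfl⟩
  · simp
  · rw [distance_zero_one]
    exact edge 0 1 (by omega) (by omega) ((adj_natCast (by omega) (by omega)).mpr (by omega))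
  · rw [distance_pendants]
    exact edist_le_add_of_edist_le e34 e35
  · rw [distance_of_spine h₁ hab h]
    exact spine a b hab h
  · rw [distance_zero_left h₂ h]
    exact (edist_le_add_of_edist_le e02 (spine 2 b h₂ h)).trans (by norm_cast; omega)
  · rw [distance_pendant h₁ h]
    exact (edist_le_add_of_edist_le (spine a (l + 3) h (by omega)) e35).trans
      (by norm_cast; omega)
  · rw [distance_zero_pendant]
    exact (edist_le_add_of_edist_le (edist_le_add_of_edist_le e02 (spine 2 (l + 3)
      (by omega) (by omega))) e35).trans (by norm_cast; omega)

lemma edist_eq (a b : Fin (l + 6)) : (F2Graph l).edist a b = distance l a b := by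
  refine le_antisymm ?_ (distance_le_edist a b)
  wlog hab : (a : ℕ) ≤ b generalizing a b
  · rw [edist_comm, distance_comm]; exact this b a (by omega)
  simpa using edist_natCast_le_distance a.isLt b.isLt hab

lemma isPackingColoringOn_of_lt_distance {w : Fin (l + 6)} {k : ℕ} {f : ℕ → ℕ}
    (hf : ∀ p, 1 ≤ f p ∧ f p ≤ k)
    (hsep : ∀ a b, a < l + 6 → b < l + 6 → a ≠ w → b ≠ w → a ≠ b → f a = f b →
      f a < distance l a b) :
    IsPackingColoringOn (F2Graph l) {w}ᶜ k (fun v => f v) := by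
  refine ⟨fun v _ => hf v, fun u hu v hv huv h => ?_⟩
  rw [edist_eq]
  exact_mod_cast hsep u v u.isLt v.isLt (Fin.val_ne_of_ne hu) (Fin.val_ne_of_ne hv)
    (Fin.val_ne_of_ne huv) h

def pattern (p : ℕ) : ℕ := if p % 4 = 2 then 3 else if p % 4 = 0 then 2 else 1

lemma pattern_spec (p : ℕ) : (p % 4 = 2 ∧ pattern p = 3) ∨ (p % 4 = 0 ∧ pattern p = 2) ∨
    (p % 2 = 1 ∧ pattern p = 1) := by
  unfold pattern; split_ifs <;> omega

-- `min p (l + 4)` puts both pendants at index `l + 4`.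
def deletionIndex (l w p : ℕ) : ℕ :=
  if l + 4 ≤ w then min p (l + 4) else if p < w then p else min p (l + 4) + 3

def deletionColoring (l w p : ℕ) : ℕ := pattern (deletionIndex l w p)

lemma pattern_mem (p : ℕ) : 1 ≤ pattern p ∧ pattern p ≤ 3 := by
  have := pattern_spec p; omega

lemma deletionColoring_lt_distance (hl : l % 2 = 0) {w : ℕ} (ha : a < l + 6) (hb : b < l + 6)
    (hw : w < l + 6) (haw : a ≠ w) (hbw : b ≠ w) (hab : a ≠ b)
    (h : deletionColoring l w a = deletionColoring l w b) :
    deletionColoring l w a < distance l a b := by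
  have := pattern_spec (deletionIndex l w a)
  have := pattern_spec (deletionIndex l w b)
  unfold deletionColoring deletionIndex distance pos Nat.dist at *
  split_ifs at * <;> omega

lemma isPackingColoringOn_deletionColoring (hl : l % 2 = 0) (w : Fin (l + 6)) :
    IsPackingColoringOn (F2Graph l) {w}ᶜ 3 (fun v => deletionColoring l w v) :=
  isPackingColoringOn_of_lt_distance (fun _ => pattern_mem _) fun _ _ ha hb haw hbw hab h =>
    deletionColoring_lt_distance hl ha hb w.isLt haw hbw hab h

section LowerBound

variable {k : ℕ} {c : ℕ → ℕ}

lemma color_mem (hc : IsPackingColoring (F2Graph l) k (fun v : Fin (l + 6) => c v)) :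
    ∀ p, p < l + 6 → 1 ≤ c p ∧ c p ≤ k := fun p hp => by
  simpa [Fin.val_cast_of_lt hp] using hc.1 (p : Fin (l + 6))

lemma color_lt_distance (hc : IsPackingColoring (F2Graph l) k (fun v : Fin (l + 6) => c v))
    (ha : a < l + 6) (hb : b < l + 6) (hab : a ≠ b) (h : c a = c b) :
    c a < distance l a b := by
  have hne : (a : Fin (l + 6)) ≠ b := fun h' => hab <| by
    simpa [Fin.val_cast_of_lt ha, Fin.val_cast_of_lt hb] using congrArg Fin.val h'
  have := hc.2 _ _ hne (by simpa [Fin.val_cast_of_lt ha, Fin.val_cast_of_lt hb] using h)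
  rw [edist_eq] at this
  simpa [Fin.val_cast_of_lt ha, Fin.val_cast_of_lt hb] using this

lemma color_lt_sub_of_spine (hc : IsPackingColoring (F2Graph l) k (fun v : Fin (l + 6) => c v))
    (a b : ℕ) (h : 1 ≤ a ∧ a < b ∧ b ≤ l + 4) : c a = c b → c a < b - a :=
  distance_of_spine h.1 h.2.1.le h.2.2 ▸ color_lt_distance hc (by omega) (by omega) (by omega)

lemma color_zero_lt_pred (hc : IsPackingColoring (F2Graph l) k (fun v : Fin (l + 6) => c v))
    (b : ℕ) (h : 2 ≤ b ∧ b ≤ l + 4) : c 0 = c b → c 0 < b - 1 :=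
  distance_zero_left h.1 h.2 ▸ color_lt_distance hc (by omega) (by omega) (by omega)

lemma color_lt_sub_of_pendant (hc : IsPackingColoring (F2Graph l) k (fun v : Fin (l + 6) => c v))
    (a : ℕ) (h : 1 ≤ a ∧ a ≤ l + 3) : c a = c (l + 5) → c a < l + 4 - a :=
  distance_pendant h.1 h.2 ▸ color_lt_distance hc (by omega) (by omega) (by omega)

lemma color_zero_ne_one (hc : IsPackingColoring (F2Graph l) k (fun v : Fin (l + 6) => c v)) :
    c 0 ≠ c 1 := fun h => by
  have := distance_zero_one (l := l) ▸ color_lt_distance hc (by omega) (by omega) (by omega) h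
  have := (color_mem hc 0 (by omega)).1
  omega

lemma color_pendants_lt (hc : IsPackingColoring (F2Graph l) k (fun v : Fin (l + 6) => c v)) :
    c (l + 4) = c (l + 5) → c (l + 4) < 2 :=
  distance_pendants ▸ color_lt_distance hc (by omega) (by omega) (by omega)

lemma color_two_eq_three_and_color_three_eq_one
    (hc : IsPackingColoring (F2Graph l) 3 (fun v : Fin (l + 6) => c v)) : c 2 = 3 ∧ c 3 = 1 := by
  have R := color_mem hc
  have S := color_lt_sub_of_spine hc
  have Z := color_zero_lt_pred hc
  have := color_zero_ne_one hc
  have := R 0 (by omega); have := R 1 (by omega); have := R 2 (by omega)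
  have := R 3 (by omega); have := R 4 (by omega)
  have := Z 2 (by omega); have := Z 3 (by omega); have := Z 4 (by omega)
  have := S 1 2 (by omega); have := S 1 3 (by omega); have := S 1 4 (by omega)
  have := S 2 3 (by omega); have := S 2 4 (by omega); have := S 3 4 (by omega)
  omega

lemma color_eq_pattern (hl : l = 0 ∨ l % 4 = 2)
    (hc : IsPackingColoring (F2Graph l) 3 (fun v : Fin (l + 6) => c v)) :
    ∀ p, 2 ≤ p → p ≤ l + 3 → c p = pattern p := by
  have R := color_mem hc
  have S := color_lt_sub_of_spine hc
  obtain ⟨h₂, h₃⟩ := color_two_eq_three_and_color_three_eq_one hc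
  intro p
  induction p using Nat.strong_induction_on with
  | _ p ih =>
    intro hp₂ hp
    rcases (by omega : p = 2 ∨ p = 3 ∨ 4 ≤ p) with rfl | rfl | hp₄
    · simpa [pattern] using h₂
    · simpa [pattern] using h₃
    have prev : ∀ i, 1 ≤ i → i ≤ 3 → 2 ≤ p - i → c (p - i) = pattern (p - i) :=
      fun i hi₁ _ hi => ih (p - i) (by omega) hi (by omega)
    have := pattern_spec p; have := R p (by omega)
    have := S (p - 1) p (by omega); have := S (p - 2) p (by omega)
    rcases (by omega : p % 4 = 0 ∨ p % 4 = 1 ∨ p % 4 = 2 ∨ p % 4 = 3) with h | h | h | h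
    · have := prev 1; have := prev 2; have := pattern_spec (p - 1); have := pattern_spec (p - 2)
      omega
    · have := prev 1; have := prev 3; have := pattern_spec (p - 1); have := pattern_spec (p - 3)
      have := S (p - 3) p (by omega)
      omega
    · have := prev 1; have := prev 2; have := pattern_spec (p - 1); have := pattern_spec (p - 2)
      omega
    -- here `p + 2 ≤ l + 4` by `hl`; colour `2` at `p` would force colour `1` at `p + 1` and
    -- leave no colour for `p + 2`
    · have h₁ : c (p - 1) = 3 := by have := prev 1; have := pattern_spec (p - 1); omega
      have := R (p + 1) (by omega); have := R (p + 2) (by omega)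
      have := S p (p + 1) (by omega); have := S (p - 1) (p + 1) (by omega)
      have := S (p + 1) (p + 2) (by omega); have := S p (p + 2) (by omega)
      have := S (p - 1) (p + 2) (by omega)
      omega

lemma color_attachment_ne_one
    (hc : IsPackingColoring (F2Graph l) 3 (fun v : Fin (l + 6) => c v)) : c (l + 3) ≠ 1 := by
  have R := color_mem hc
  have S := color_lt_sub_of_spine hc
  have P := color_lt_sub_of_pendant hc
  have := color_pendants_lt hc
  have := R (l + 2) (by omega); have := R (l + 4) (by omega); have := R (l + 5) (by omega)
  have := S (l + 2) (l + 3) (by omega); have := S (l + 2) (l + 4) (by omega)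
  have := S (l + 3) (l + 4) (by omega)
  have := P (l + 2) (by omega); have := P (l + 3) (by omega)
  omega

theorem not_isPackingColoring_three (hl : l = 0 ∨ l % 4 = 2) (c : Fin (l + 6) → ℕ) :
    ¬ IsPackingColoring (F2Graph l) 3 c := fun hc => by
  let c' : ℕ → ℕ := fun p => c p
  have hc' : IsPackingColoring (F2Graph l) 3 (fun v : Fin (l + 6) => c' v) := by
    simpa [c'] using hc
  have hp : pattern (l + 3) = 1 := by have := pattern_spec (l + 3); omega
  exact color_attachment_ne_one hc' ((color_eq_pattern hl hc' (l + 3) (by omega) le_rfl).trans hp)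

end LowerBound

end F2Graph

theorem F2_fourVertexCritical (l : ℕ) (hl : l = 0 ∨ l % 4 = 2) :
    FourVertexCritical (F2Graph l) := by
  have heven : l % 2 = 0 := by omega
  refine ⟨packingChromaticNumber_eq_succ
    (F2Graph.isPackingColoringOn_deletionColoring heven 1).update
    (F2Graph.not_isPackingColoring_three hl), fun w => ?_⟩
  exact (packingChromaticNumber_le
    (F2Graph.isPackingColoringOn_deletionColoring heven w).induce).trans_lt (by norm_num)
end
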